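/- Suppose an optimal triple (x*, q*, D*) exists. Then along any Mirror-P-EXTRA trajectory (x^k, q^k, D^k), the first-order optimality residuals decay at an o(1/k) rate: lim_{k→∞} k·‖U D^{k+1}‖_F² = 0 and lim_{k→∞} k·‖x^{k+1} − r + c Uᵀ q^{k+1}‖_F² = 0. -/

import Mathlib

open Matrix Filter Topology

noncomputable section

def frobSq {m p : ℕ} (A : Matrix (Fin m) (Fin p) ℝ) : ℝ := ∑ i, ∑ j, (A i j) ^ 2

def IsSubgradAt {p : ℕ} (h : (Fin p → ℝ) → ℝ) (d x : Fin p → ℝ) : Prop :=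
  ∀ y, h x + d ⬝ᵥ (y - x) ≤ h y

/-!
Let `s_k := c‖q^{k+1} - q^k‖² + ‖D^{k+1} - D^k‖²_P` with `P = B - c𝕃`. Both residuals are
controlled by `s_k`: `U D^{k+1} = q^{k+1} - q^k`, and the `x`-residual equals
`-P (D^{k+1} - D^k)`. Monotonicity of the subdifferentials, tested against the difference of two
instances of the `x`-update, combined with the three-point identity
`2⟨a - b, a - e⟩_P = ‖a - b‖²_P + ‖a - e‖²_P - ‖b - e‖²_P`, gives the Fejér inequality
`s_k + a_{k+1} ≤ a_k` for the distance `a_k := c‖q^k - q*‖² + ‖D^k - D*‖²_P` to the optimum, and,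
between consecutive iterates, `s_{k+1} ≤ s_k`. A nonincreasing summable sequence is `o(1/k)`.
-/

theorem summable_of_add_le {s a : ℕ → ℝ} (hs : ∀ k, 0 ≤ s k) (ha : ∀ k, 0 ≤ a k)
    (h : ∀ k, s k + a (k + 1) ≤ a k) : Summable s := by
  refine summable_of_sum_range_le (c := a 0) hs fun m => ?_
  have htel : ∑ k ∈ Finset.range m, s k ≤ ∑ k ∈ Finset.range m, (a k - a (k + 1)) :=
    Finset.sum_le_sum fun k _ => by linarith [h k]
  rw [Finset.sum_range_sub'] at htel
  linarith [ha m]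

theorem tendsto_nat_mul_of_antitone_of_summable {s : ℕ → ℝ} (hs : Antitone s)
    (hsum : Summable s) : Tendsto (fun k : ℕ => (k : ℝ) * s k) atTop (𝓝 0) := by
  have hnonneg : ∀ k, 0 ≤ s k := hs.le_of_tendsto hsum.tendsto_atTop_zero
  have hbound : ∀ k : ℕ, (k : ℝ) * s k
      ≤ 2 * (∑ i ∈ Finset.range k, s i - ∑ i ∈ Finset.range (k / 2), s i) := by
    intro k
    rw [← Finset.sum_Ico_eq_sub _ (by omega : k / 2 ≤ k)]
    have hcard : ((k - k / 2 : ℕ) : ℝ) * s k ≤ ∑ i ∈ Finset.Ico (k / 2) k, s i := by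
      simpa [nsmul_eq_mul] using Finset.card_nsmul_le_sum (Finset.Ico (k / 2) k) s (s k)
        fun i hi => hs (Finset.mem_Ico.mp hi).2.le
    have hhalf : (k : ℝ) ≤ 2 * ((k - k / 2 : ℕ) : ℝ) := by
      exact_mod_cast (by omega : k ≤ 2 * (k - k / 2))
    nlinarith [hnonneg k]
  have hpartial := hsum.hasSum.tendsto_sum_nat
  have hdiv : Tendsto (fun k : ℕ => k / 2) atTop atTop :=
    tendsto_atTop_atTop.mpr fun b => ⟨2 * b, fun k hk => by omega⟩
  refine squeeze_zero (fun k => mul_nonneg k.cast_nonneg (hnonneg k)) hbound ?_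
  simpa using ((hpartial.sub (hpartial.comp hdiv)).const_mul 2)

theorem tendsto_nat_mul_of_le_mul {f s : ℕ → ℝ} (C : ℝ) (hf : ∀ k, 0 ≤ f k)
    (hfs : ∀ k, f k ≤ C * s k) (hs : Tendsto (fun k : ℕ => (k : ℝ) * s k) atTop (𝓝 0)) :
    Tendsto (fun k : ℕ => (k : ℝ) * f k) atTop (𝓝 0) := by
  refine squeeze_zero (fun k => mul_nonneg k.cast_nonneg (hf k)) (fun k => ?_)
    (by simpa using hs.const_mul C)
  calc (k : ℝ) * f k ≤ k * (C * s k) := mul_le_mul_of_nonneg_left (hfs k) k.cast_nonneg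
    _ = C * (k * s k) := by ring

variable {l m n p : ℕ}

theorem frobSq_neg (A : Matrix (Fin m) (Fin p) ℝ) : frobSq (-A) = frobSq A := by
  simp [frobSq]

theorem frobSq_nonneg (A : Matrix (Fin m) (Fin p) ℝ) : 0 ≤ frobSq A := by
  unfold frobSq
  positivity

section Frobenius

attribute [local instance] Matrix.frobeniusNormedAddCommGroup

theorem frobSq_eq_norm_sq (A : Matrix (Fin m) (Fin p) ℝ) : frobSq A = ‖A‖ ^ 2 := by
  rw [frobenius_norm_def, ← Real.sqrt_eq_rpow, Real.sq_sqrt (by positivity)]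
  simp [frobSq]

theorem frobSq_mul_le (M : Matrix (Fin l) (Fin m) ℝ) (A : Matrix (Fin m) (Fin p) ℝ) :
    frobSq (M * A) ≤ frobSq M * frobSq A := by
  simp only [frobSq_eq_norm_sq, ← mul_pow]
  exact pow_le_pow_left₀ (norm_nonneg _) (frobenius_norm_mul M A) 2

end Frobenius

theorem frobSq_eq_trace (A : Matrix (Fin m) (Fin p) ℝ) : frobSq A = (Aᵀ * A).trace := by
  simp only [frobSq, trace, diag, mul_apply, transpose_apply, sq]
  exact Finset.sum_comm

def weightedFrobSq (P : Matrix (Fin m) (Fin m) ℝ) (A : Matrix (Fin m) (Fin p) ℝ) : ℝ :=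
  (Aᵀ * (P * A)).trace

theorem weightedFrobSq_one (A : Matrix (Fin m) (Fin p) ℝ) : weightedFrobSq 1 A = frobSq A := by
  rw [weightedFrobSq, Matrix.one_mul, frobSq_eq_trace]

theorem weightedFrobSq_nonneg {P : Matrix (Fin m) (Fin m) ℝ} (hP : P.PosSemidef)
    (A : Matrix (Fin m) (Fin p) ℝ) : 0 ≤ weightedFrobSq P A := by
  simpa [weightedFrobSq, Matrix.mul_assoc] using (hP.conjTranspose_mul_mul_same A).trace_nonneg

theorem trace_transpose_mul_mul_comm {P : Matrix (Fin m) (Fin m) ℝ} (hP : Pᵀ = P)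
    (A B : Matrix (Fin m) (Fin p) ℝ) : (Aᵀ * (P * B)).trace = (Bᵀ * (P * A)).trace := by
  rw [← trace_transpose, transpose_mul, transpose_mul, transpose_transpose, hP, Matrix.mul_assoc]

theorem two_mul_trace_sub_mul_sub {P : Matrix (Fin m) (Fin m) ℝ} (hP : Pᵀ = P)
    (a b e : Matrix (Fin m) (Fin p) ℝ) :
    2 * ((a - b)ᵀ * (P * (a - e))).trace
      = weightedFrobSq P (a - b) + weightedFrobSq P (a - e) - weightedFrobSq P (b - e) := by
  simp only [weightedFrobSq, transpose_sub, Matrix.mul_sub, Matrix.sub_mul, trace_sub]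
  linarith [trace_transpose_mul_mul_comm hP a b, trace_transpose_mul_mul_comm hP a e,
    trace_transpose_mul_mul_comm hP b e]

open scoped MatrixOrder in
theorem exists_frobSq_mul_le_weightedFrobSq {P : Matrix (Fin m) (Fin m) ℝ} (hP : P.PosSemidef) :
    ∃ C, 0 ≤ C ∧ ∀ A : Matrix (Fin m) (Fin p) ℝ, frobSq (P * A) ≤ C * weightedFrobSq P A := by
  set S := CFC.sqrt P
  have hSS : S * S = P := CFC.sqrt_mul_sqrt_self P (nonneg_iff_posSemidef.mpr hP)
  have hS : Sᵀ = S := by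
    simpa using (nonneg_iff_posSemidef.mp (CFC.sqrt_nonneg P)).isHermitian.eq
  refine ⟨frobSq S, frobSq_nonneg S, fun A => ?_⟩
  calc frobSq (P * A) = frobSq (S * (S * A)) := by rw [← Matrix.mul_assoc, hSS]
    _ ≤ frobSq S * frobSq (S * A) := frobSq_mul_le _ _
    _ = frobSq S * weightedFrobSq P A := by
      rw [frobSq_eq_trace (S * A), weightedFrobSq, transpose_mul, hS, Matrix.mul_assoc,
        ← Matrix.mul_assoc S, hSS]

theorem IsSubgradAt.dotProduct_sub_nonneg {f : (Fin p → ℝ) → ℝ} {d e x y : Fin p → ℝ}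
    (hd : IsSubgradAt f d x) (he : IsSubgradAt f e y) : 0 ≤ (d - e) ⬝ᵥ (x - y) := by
  have h₁ := hd y
  have h₂ := he x
  rw [← neg_sub x y, dotProduct_neg] at h₁
  rw [sub_dotProduct]
  linarith

theorem trace_transpose_mul_eq_sum_dotProduct (A B : Matrix (Fin n) (Fin p) ℝ) :
    (Aᵀ * B).trace = ∑ i, A i ⬝ᵥ B i := by
  simp only [trace, diag, mul_apply, transpose_apply, dotProduct]
  exact Finset.sum_comm

theorem trace_transpose_sub_mul_sub_nonneg {h : Fin n → (Fin p → ℝ) → ℝ}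
    {D₁ D₂ x₁ x₂ : Matrix (Fin n) (Fin p) ℝ} (h₁ : ∀ i, IsSubgradAt (h i) (D₁ i) (x₁ i))
    (h₂ : ∀ i, IsSubgradAt (h i) (D₂ i) (x₂ i)) : 0 ≤ ((D₁ - D₂)ᵀ * (x₁ - x₂)).trace := by
  rw [trace_transpose_mul_eq_sum_dotProduct]
  exact Finset.sum_nonneg fun i _ => IsSubgradAt.dotProduct_sub_nonneg (h₁ i) (h₂ i)

def pairEnergy (c : ℝ) (P : Matrix (Fin n) (Fin n) ℝ) (q : Matrix (Fin m) (Fin p) ℝ)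
    (D : Matrix (Fin n) (Fin p) ℝ) (q' : Matrix (Fin m) (Fin p) ℝ)
    (D' : Matrix (Fin n) (Fin p) ℝ) : ℝ :=
  c * frobSq (q - q') + weightedFrobSq P (D - D')

section pairEnergy

variable {c : ℝ} {P : Matrix (Fin n) (Fin n) ℝ}

theorem pairEnergy_nonneg (hc : 0 ≤ c) (hP : P.PosSemidef) (q q' : Matrix (Fin m) (Fin p) ℝ)
    (D D' : Matrix (Fin n) (Fin p) ℝ) : 0 ≤ pairEnergy c P q D q' D' :=
  add_nonneg (mul_nonneg hc (frobSq_nonneg _)) (weightedFrobSq_nonneg hP _)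

theorem mul_frobSq_le_pairEnergy (hP : P.PosSemidef) (q q' : Matrix (Fin m) (Fin p) ℝ)
    (D D' : Matrix (Fin n) (Fin p) ℝ) : c * frobSq (q - q') ≤ pairEnergy c P q D q' D' :=
  le_add_of_nonneg_right (weightedFrobSq_nonneg hP _)

theorem weightedFrobSq_le_pairEnergy (hc : 0 ≤ c) (q q' : Matrix (Fin m) (Fin p) ℝ)
    (D D' : Matrix (Fin n) (Fin p) ℝ) : weightedFrobSq P (D - D') ≤ pairEnergy c P q D q' D' :=
  le_add_of_nonneg_left (mul_nonneg hc (frobSq_nonneg _))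

theorem pairEnergy_add_pairEnergy_le (hP : Pᵀ = P) {a b e : Matrix (Fin m) (Fin p) ℝ}
    {f g h : Matrix (Fin n) (Fin p) ℝ}
    (H : c * ((a - b)ᵀ * (a - e)).trace + ((f - h)ᵀ * (P * (f - g))).trace ≤ 0) :
    pairEnergy c P a f b g + pairEnergy c P a f e h ≤ pairEnergy c P b g e h := by
  have hq := two_mul_trace_sub_mul_sub transpose_one a b e
  have hD := two_mul_trace_sub_mul_sub hP f g h
  simp only [Matrix.one_mul, weightedFrobSq_one] at hq
  rw [trace_transpose_mul_mul_comm hP (f - h)] at H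
  simp only [pairEnergy]
  linear_combination 2 * H - c * hq - hD

end pairEnergy

theorem mul_trace_add_trace_nonpos_of_isSubgradAt {h : Fin n → (Fin p → ℝ) → ℝ}
    {U : Matrix (Fin m) (Fin n) ℝ} {P : Matrix (Fin n) (Fin n) ℝ} {r : Matrix (Fin n) (Fin p) ℝ}
    {c : ℝ} {x₁ x₂ D₁ D₂ E₁ E₂ : Matrix (Fin n) (Fin p) ℝ} {q₁ q₂ : Matrix (Fin m) (Fin p) ℝ}
    (hs₁ : ∀ i, IsSubgradAt (h i) (D₁ i) (x₁ i)) (hs₂ : ∀ i, IsSubgradAt (h i) (D₂ i) (x₂ i))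
    (h₁ : x₁ - r + c • (Uᵀ * q₁) + P * E₁ = 0) (h₂ : x₂ - r + c • (Uᵀ * q₂) + P * E₂ = 0) :
    c * ((U * (D₁ - D₂))ᵀ * (q₁ - q₂)).trace + ((D₁ - D₂)ᵀ * (P * (E₁ - E₂))).trace ≤ 0 := by
  have hx : x₁ - x₂ = -(c • (Uᵀ * (q₁ - q₂)) + P * (E₁ - E₂)) := by
    rw [eq_neg_iff_add_eq_zero, ← sub_eq_zero.mpr (h₁.trans h₂.symm)]
    simp only [Matrix.mul_sub, smul_sub]
    abel
  have hmono := trace_transpose_sub_mul_sub_nonneg hs₁ hs₂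
  rw [hx, Matrix.mul_neg, Matrix.mul_add, Matrix.mul_smul, ← Matrix.mul_assoc _ Uᵀ,
    ← transpose_mul, trace_neg, trace_add, trace_smul, smul_eq_mul] at hmono
  linarith

/-- `P` stands for `B - c𝕃`. -/
structure IsMirrorPExtraTrajectory (U : Matrix (Fin m) (Fin n) ℝ) (P : Matrix (Fin n) (Fin n) ℝ)
    (r : Matrix (Fin n) (Fin p) ℝ) (h : Fin n → (Fin p → ℝ) → ℝ) (c : ℝ)
    (x D : ℕ → Matrix (Fin n) (Fin p) ℝ) (q : ℕ → Matrix (Fin m) (Fin p) ℝ) : Prop where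
  subgrad : ∀ k i, IsSubgradAt (h i) (D k i) (x k i)
  update_x : ∀ k, x (k + 1) - r + c • (Uᵀ * q (k + 1)) + P * (D (k + 1) - D k) = 0
  update_q : ∀ k, q (k + 1) = q k + U * D (k + 1)

namespace IsMirrorPExtraTrajectory

variable {U : Matrix (Fin m) (Fin n) ℝ} {P : Matrix (Fin n) (Fin n) ℝ}
  {r : Matrix (Fin n) (Fin p) ℝ} {h : Fin n → (Fin p → ℝ) → ℝ} {c : ℝ}
  {x D : ℕ → Matrix (Fin n) (Fin p) ℝ} {q : ℕ → Matrix (Fin m) (Fin p) ℝ}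

theorem mul_D_succ (ht : IsMirrorPExtraTrajectory U P r h c x D q) (k : ℕ) :
    U * D (k + 1) = q (k + 1) - q k := by
  rw [ht.update_q k, add_sub_cancel_left]

theorem pairEnergy_step_add_le (ht : IsMirrorPExtraTrajectory U P r h c x D q) (hP : Pᵀ = P)
    {xs Ds : Matrix (Fin n) (Fin p) ℝ} {qs : Matrix (Fin m) (Fin p) ℝ}
    (hs : ∀ i, IsSubgradAt (h i) (Ds i) (xs i)) (hxs : xs - r + c • (Uᵀ * qs) = 0)
    (hDs : U * Ds = 0) (k : ℕ) :
    pairEnergy c P (q (k + 1)) (D (k + 1)) (q k) (D k)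
        + pairEnergy c P (q (k + 1)) (D (k + 1)) qs Ds
      ≤ pairEnergy c P (q k) (D k) qs Ds := by
  have hxs' : xs - r + c • (Uᵀ * qs) + P * (0 : Matrix (Fin n) (Fin p) ℝ) = 0 := by
    rw [Matrix.mul_zero, add_zero, hxs]
  have H :=
    mul_trace_add_trace_nonpos_of_isSubgradAt (ht.subgrad (k + 1)) hs (ht.update_x k) hxs'
  rw [Matrix.mul_sub U, hDs, sub_zero, ht.mul_D_succ, sub_zero] at H
  exact pairEnergy_add_pairEnergy_le hP H

theorem antitone_pairEnergy_step (ht : IsMirrorPExtraTrajectory U P r h c x D q) (hc : 0 ≤ c)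
    (hP : P.PosSemidef) :
    Antitone fun k => pairEnergy c P (q (k + 1)) (D (k + 1)) (q k) (D k) := by
  refine antitone_nat_of_succ_le fun k => ?_
  have H := mul_trace_add_trace_nonpos_of_isSubgradAt (ht.subgrad (k + 1 + 1))
    (ht.subgrad (k + 1)) (ht.update_x (k + 1)) (ht.update_x k)
  rw [Matrix.mul_sub U, ht.mul_D_succ, ht.mul_D_succ] at H
  have hle := pairEnergy_add_pairEnergy_le (e := 0) (h := 0) (by simpa using hP.isHermitian.eq)
    (by simpa only [sub_zero] using H)
  have hnonneg := pairEnergy_nonneg hc hP (q (k + 1 + 1) - q (k + 1)) (q (k + 1) - q k)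
    (D (k + 1 + 1) - D (k + 1)) (D (k + 1) - D k)
  simp only [pairEnergy, sub_zero] at hle hnonneg ⊢
  linarith

theorem tendsto_nat_mul_pairEnergy_step (ht : IsMirrorPExtraTrajectory U P r h c x D q)
    (hc : 0 ≤ c) (hP : P.PosSemidef) {xs Ds : Matrix (Fin n) (Fin p) ℝ}
    {qs : Matrix (Fin m) (Fin p) ℝ}
    (hs : ∀ i, IsSubgradAt (h i) (Ds i) (xs i)) (hxs : xs - r + c • (Uᵀ * qs) = 0)
    (hDs : U * Ds = 0) :
    Tendsto (fun k : ℕ => (k : ℝ) * pairEnergy c P (q (k + 1)) (D (k + 1)) (q k) (D k))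
      atTop (𝓝 0) :=
  tendsto_nat_mul_of_antitone_of_summable (ht.antitone_pairEnergy_step hc hP)
    (summable_of_add_le (fun _ => pairEnergy_nonneg hc hP _ _ _ _)
      (fun _ => pairEnergy_nonneg hc hP _ _ _ _)
      (ht.pairEnergy_step_add_le (by simpa using hP.isHermitian.eq) hs hxs hDs))

end IsMirrorPExtraTrajectory

theorem stmt_7_general (n p : ℕ)
    (U : Matrix (Fin (n - 1)) (Fin n) ℝ)
    (r : Matrix (Fin n) (Fin p) ℝ)
    (h : Fin n → (Fin p → ℝ) → ℝ)
    (c : ℝ) (hc : 0 < c)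
    (β : Fin n → ℝ)
    (hPSD : (Matrix.diagonal β - c • (Uᵀ * U)).PosSemidef)
    -- Mirror-P-EXTRA trajectory
    (x D : ℕ → Matrix (Fin n) (Fin p) ℝ)
    (q : ℕ → Matrix (Fin (n - 1)) (Fin p) ℝ)
    (hsub : ∀ k i, IsSubgradAt (h i) (D k i) (x k i))
    (hrec1 : ∀ k : ℕ,
      x (k + 1) - r + c • (Uᵀ * q (k + 1))
        + (Matrix.diagonal β - c • (Uᵀ * U)) * (D (k + 1) - D k) = 0)
    (hrec2 : ∀ k : ℕ, q (k + 1) = q k + U * D (k + 1))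
    -- an optimal triple exists
    (hopt : ∃ (xs Ds : Matrix (Fin n) (Fin p) ℝ) (qs : Matrix (Fin (n - 1)) (Fin p) ℝ),
      (∀ i, IsSubgradAt (h i) (Ds i) (xs i)) ∧
      xs - r + c • (Uᵀ * qs) = 0 ∧
      U * Ds = 0) :
    Tendsto (fun k : ℕ => (k : ℝ) * frobSq (U * D (k + 1))) atTop (𝓝 0) ∧
    Tendsto (fun k : ℕ =>
      (k : ℝ) * frobSq (x (k + 1) - r + c • (Uᵀ * q (k + 1)))) atTop (𝓝 0) := by
  obtain ⟨xs, Ds, qs, hs, hxs, hDs⟩ := hopt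
  set P := Matrix.diagonal β - c • (Uᵀ * U)
  have ht : IsMirrorPExtraTrajectory U P r h c x D q := ⟨hsub, hrec1, hrec2⟩
  have hE := ht.tendsto_nat_mul_pairEnergy_step hc.le hPSD hs hxs hDs
  obtain ⟨C, hC0, hC⟩ := exists_frobSq_mul_le_weightedFrobSq (p := p) hPSD
  constructor
  · refine tendsto_nat_mul_of_le_mul c⁻¹ (fun _ => frobSq_nonneg _) (fun k => ?_) hE
    rw [ht.mul_D_succ, le_inv_mul_iff₀ hc]
    exact mul_frobSq_le_pairEnergy hPSD _ _ _ _
  · refine tendsto_nat_mul_of_le_mul C (fun _ => frobSq_nonneg _) (fun k => ?_) hE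
    rw [eq_neg_of_add_eq_zero_left (hrec1 k), frobSq_neg]
    exact (hC _).trans
      (mul_le_mul_of_nonneg_left (weightedFrobSq_le_pairEnergy hc.le _ _ _ _) hC0)

/-- `o(1/k)` decay of the first-order optimality residuals of Mirror-P-EXTRA
(Theorem 2). -/
theorem stmt_7 (n p : ℕ) (hn : 2 ≤ n) (hp : 1 ≤ p)
    (U : Matrix (Fin (n - 1)) (Fin n) ℝ)
    (hU : ∀ v : Fin n → ℝ, U.mulVec v = 0 ↔ ∃ a : ℝ, v = fun _ => a)
    (r : Matrix (Fin n) (Fin p) ℝ)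
    (h : Fin n → (Fin p → ℝ) → ℝ)
    (hconv : ∀ i, ConvexOn ℝ Set.univ (h i))
    (c : ℝ) (hc : 0 < c)
    (β : Fin n → ℝ) (hβ : ∀ i, 0 < β i)
    (hPSD : (Matrix.diagonal β - c • (Uᵀ * U)).PosSemidef)
    -- Mirror-P-EXTRA trajectory
    (x D : ℕ → Matrix (Fin n) (Fin p) ℝ)
    (q : ℕ → Matrix (Fin (n - 1)) (Fin p) ℝ)
    (hsub : ∀ k i, IsSubgradAt (h i) (D k i) (x k i))
    (hrec1 : ∀ k : ℕ,
      x (k + 1) - r + c • (Uᵀ * q (k + 1))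
        + (Matrix.diagonal β - c • (Uᵀ * U)) * (D (k + 1) - D k) = 0)
    (hrec2 : ∀ k : ℕ, q (k + 1) = q k + U * D (k + 1))
    -- an optimal triple exists
    (hopt : ∃ (xs Ds : Matrix (Fin n) (Fin p) ℝ) (qs : Matrix (Fin (n - 1)) (Fin p) ℝ),
      (∀ i, IsSubgradAt (h i) (Ds i) (xs i)) ∧
      xs - r + c • (Uᵀ * qs) = 0 ∧
      U * Ds = 0) :
    Tendsto (fun k : ℕ => (k : ℝ) * frobSq (U * D (k + 1))) atTop (𝓝 0) ∧
    Tendsto (fun k : ℕ =>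
      (k : ℝ) * frobSq (x (k + 1) - r + c • (Uᵀ * q (k + 1)))) atTop (𝓝 0) :=
  stmt_7_general n p U r h c hc β hPSD x D q hsub hrec1 hrec2 hopt
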